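/- arXiv:1010.0384 — 3 statements merged into one kernel-verified Lean document; each statement's English description precedes it below -/
import Mathlib

section
/- Let m ≡ 0 (mod 4) and let p be a prime with m/4 < p ≤ m/2. Let W be the set of vectors in {-1,1}^m with zero coordinate sum and a = m - 4p. If Q ⊆ W is a set such that (x,y) ≠ a for all x, y ∈ Q, then |Q| ≤ C(m, p) (the binomial coefficient m choose p). -/
/-!
Identify each `x ∈ Q` with its set `A_x = {i | x i = 1}` of size `k = m/2`; then
`(x, y) = 4|A_x ∩ A_y| - m`, so the forbidden inner product is `|A_x ∩ A_y| = k - p`, and as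
`k < 2p` the intersections of distinct members avoid `k` modulo `p`. This is the modular
Frankl–Wilson setting: the functions `X ↦ ∏_{l ≠ k mod p} (|A ∩ X| - l)` are linearly independent
on the family (their matrix is diagonal and invertible mod `p`) and are multilinear of degree `p - 1`
in the indicator coordinates, hence lie in a space of dimension `C(m, p-1) ≤ C(m, p)`.
-/

open Finset Submodule

theorem Matrix.linearIndependent_intCast_rows_of_diagonal_mod {ι K R : Type*} [Fintype ι]
    [DecidableEq ι] [Field K] [CharZero K] [CommRing R] [IsDomain R] (M : Matrix ι ι ℤ)
    (hdiag : ∀ i, (M i i : R) ≠ 0) (hoff : ∀ i j, i ≠ j → (M i j : R) = 0) :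
    LinearIndependent K fun i j => (M i j : K) := by
  have hdiagonal : M.map (Int.cast : ℤ → R) = diagonal fun i => (M i i : R) := by
    ext i j
    rcases eq_or_ne i j with rfl | hij
    · simp
    · simp [hij, hoff i j hij]
  have hdet : M.det ≠ 0 := by
    intro h
    have := Int.cast_det (R := R) M
    rw [h, hdiagonal, det_diagonal, Int.cast_zero] at this
    exact prod_ne_zero_iff.2 (fun i _ => hdiag i) this.symm
  have hunit : IsUnit (M.map (Int.cast : ℤ → K)) := by
    rw [isUnit_iff_isUnit_det, isUnit_iff_ne_zero, ← Int.cast_det]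
    exact_mod_cast hdet
  exact linearIndependent_rows_iff_isUnit.2 hunit

namespace FranklWilson

variable {ι α : Type*} (K : Type*) [Field K] [DecidableEq α] (B : ι → Finset α)

def subsetIndicator (S : Finset α) : ι → K := fun j => if S ⊆ B j then 1 else 0

/-- Restrictions to the family `B` of multilinear polynomials of degree at most `d` in the
indicator coordinates `X ↦ [a ∈ X]`. -/
def monomialSpan (d : ℕ) : Submodule K (ι → K) :=
  span K (subsetIndicator K B '' {S | S.card ≤ d})

lemma subsetIndicator_mul (S T : Finset α) :
    subsetIndicator K B S * subsetIndicator K B T = subsetIndicator K B (S ∪ T) := by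
  funext j
  by_cases hS : S ⊆ B j <;> by_cases hT : T ⊆ B j <;> simp [subsetIndicator, union_subset_iff, *]

lemma monomialSpan_mul_le (d e : ℕ) :
    monomialSpan K B d * monomialSpan K B e ≤ monomialSpan K B (d + e) := by
  rw [monomialSpan, monomialSpan, span_mul_span]
  refine span_mono ?_
  rintro _ ⟨_, ⟨S, hS, rfl⟩, _, ⟨T, hT, rfl⟩, rfl⟩
  exact ⟨S ∪ T, (card_union_le S T).trans (add_le_add hS hT), (subsetIndicator_mul K B S T).symm⟩

lemma prod_mem_monomialSpan {β : Type*} (s : Finset β) (g : β → ι → K)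
    (hg : ∀ b ∈ s, g b ∈ monomialSpan K B 1) : ∏ b ∈ s, g b ∈ monomialSpan K B s.card := by
  induction s using Finset.cons_induction with
  | empty =>
    refine subset_span ⟨∅, by simp, ?_⟩
    funext j
    simp [subsetIndicator]
  | cons b s hb ih =>
    rw [prod_cons, card_cons, add_comm]
    exact monomialSpan_mul_le K B 1 s.card <| mul_mem_mul (hg b (mem_cons_self b s))
      (ih fun c hc => hg c (mem_cons_of_mem hc))

lemma card_inter_sub_mem_monomialSpan (A : Finset α) (c : K) :
    (fun j => ((A ∩ B j).card : K) - c) ∈ monomialSpan K B 1 := by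
  have hsum : (fun j => ((A ∩ B j).card : K) - c) =
      ∑ a ∈ A, subsetIndicator K B {a} - c • subsetIndicator K B ∅ := by
    funext j
    simp [subsetIndicator]
  rw [hsum]
  exact sub_mem (sum_mem fun a _ => subset_span ⟨{a}, by simp, rfl⟩)
    (smul_mem _ c (subset_span ⟨∅, by simp, rfl⟩))

variable [Fintype α] {k : ℕ}

lemma sum_subsetIndicator_insert (hB : ∀ j, (B j).card = k) (S : Finset α) :
    ∑ a ∈ Sᶜ, subsetIndicator K B (insert a S) = ((k : K) - S.card) • subsetIndicator K B S := by
  funext j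
  simp only [Finset.sum_apply, Pi.smul_apply, smul_eq_mul, subsetIndicator, insert_subset_iff]
  by_cases hS : S ⊆ B j
  · have hcard : (Sᶜ ∩ B j).card = k - S.card := by
      rw [inter_comm, ← sdiff_eq_inter_compl, card_sdiff_of_subset hS, hB]
    simp [hS, hcard, Nat.cast_sub (hB j ▸ card_le_card hS)]
  · simp [hS]

lemma monomialSpan_le_span_card_eq [CharZero K] (hB : ∀ j, (B j).card = k) {d : ℕ}
    (hdk : d ≤ k) : monomialSpan K B d ≤ span K (subsetIndicator K B '' {S | S.card = d}) := by
  refine span_le.2 ?_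
  rintro _ ⟨S, hS, rfl⟩
  obtain ⟨n, hn⟩ := Nat.exists_eq_add_of_le hS
  induction n generalizing S with
  | zero => exact subset_span ⟨S, hn.symm, rfl⟩
  | succ n ih =>
    have hk : (k : K) - S.card ≠ 0 := by
      rw [sub_ne_zero, Ne, Nat.cast_inj]
      omega
    rw [SetLike.mem_coe, ← smul_mem_iff _ hk, ← sum_subsetIndicator_insert K B hB]
    refine sum_mem fun a ha => ?_
    have hcard := card_insert_of_notMem (mem_compl.1 ha)
    exact ih _ (show _ ≤ d by omega) (by omega)

lemma finrank_span_subsetIndicator_le (d : ℕ) :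
    Module.finrank K (span K (subsetIndicator K B '' {S | S.card = d})) ≤
      (Fintype.card α).choose d := by
  classical
  have hset : subsetIndicator K B '' {S | S.card = d} =
      ((powersetCard d univ).image (subsetIndicator K B) : Set (ι → K)) := by
    ext
    simp
  rw [hset]
  refine (finrank_span_finset_le_card _).trans (card_image_le.trans ?_)
  rw [card_powersetCard, card_univ]

theorem card_le_choose [Fintype ι] {p : ℕ} [Fact p.Prime] {L : Finset (ZMod p)}
    (hB : ∀ i, (B i).card = k) (hkL : (k : ZMod p) ∉ L) (hLk : L.card ≤ k)
    (hinter : ∀ i j, i ≠ j → ((B i ∩ B j).card : ZMod p) ∈ L) :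
    Fintype.card ι ≤ (Fintype.card α).choose L.card := by
  classical
  let M : Matrix ι ι ℤ := Matrix.of fun i j => ∏ l ∈ L, (((B i ∩ B j).card : ℤ) - l.val)
  have hM : ∀ i j, (M i j : ZMod p) = ∏ l ∈ L, (((B i ∩ B j).card : ZMod p) - l) := by
    simp [M]
  have hli : LinearIndependent ℚ fun i j => (M i j : ℚ) := by
    refine Matrix.linearIndependent_intCast_rows_of_diagonal_mod (R := ZMod p) M
      (fun i => ?_) (fun i j hij => ?_)
    · rw [hM, inter_self, hB]
      exact prod_ne_zero_iff.2 fun l hl => sub_ne_zero.2 (ne_of_mem_of_not_mem hl hkL).symm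
    · rw [hM]
      exact prod_eq_zero (hinter i j hij) (sub_self _)
  have hrow : ∀ i, (fun j => (M i j : ℚ)) ∈
      span ℚ (subsetIndicator ℚ B '' {S | S.card = L.card}) := by
    intro i
    refine monomialSpan_le_span_card_eq ℚ B hB hLk ?_
    have := prod_mem_monomialSpan ℚ B L _
      fun l _ => card_inter_sub_mem_monomialSpan ℚ B (B i) (l.val : ℚ)
    convert this using 1
    funext j
    simp [M]
  calc Fintype.card ι = Module.finrank ℚ (span ℚ (Set.range fun i j => (M i j : ℚ))) :=
        (finrank_span_eq_card hli).symm
    _ ≤ Module.finrank ℚ (span ℚ (subsetIndicator ℚ B '' {S | S.card = L.card})) :=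
        Submodule.finrank_mono (span_le.2 (Set.range_subset_iff.2 hrow))
    _ ≤ (Fintype.card α).choose L.card := finrank_span_subsetIndicator_le ℚ B L.card

end FranklWilson

section SignVectors

variable {n : Type*} [Fintype n]

def posSupport (x : n → ℤ) : Finset n := {i | x i = 1}

variable {x y : n → ℤ} (hx : ∀ i, x i = 1 ∨ x i = -1) (hy : ∀ i, y i = 1 ∨ y i = -1)
include hx

lemma sum_eq_two_mul_card_posSupport_sub :
    ∑ i, x i = 2 * (posSupport x).card - Fintype.card n := by
  have hcoord : ∀ i, x i = 2 * (if x i = 1 then 1 else 0) - 1 := fun i => by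
    rcases hx i with h | h <;> simp [h]
  rw [sum_congr rfl fun i _ => hcoord i, sum_sub_distrib, ← mul_sum, sum_boole]
  simp [posSupport]

include hy

lemma sum_mul_eq_card_inter_posSupport [DecidableEq n] :
    ∑ i, x i * y i = 4 * (posSupport x ∩ posSupport y).card - 2 * (posSupport x).card
      - 2 * (posSupport y).card + Fintype.card n := by
  have hcoord : ∀ i, x i * y i = 4 * (if x i = 1 ∧ y i = 1 then 1 else 0)
      - 2 * (if x i = 1 then 1 else 0) - 2 * (if y i = 1 then 1 else 0) + 1 := fun i => by
    rcases hx i with h | h <;> rcases hy i with h' | h' <;> simp [h, h']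
  rw [sum_congr rfl fun i _ => hcoord i]
  simp only [sum_add_distrib, sum_sub_distrib, ← mul_sum, sum_boole, filter_and]
  simp [posSupport]

lemma eq_of_posSupport_eq (h : posSupport x = posSupport y) : x = y := by
  funext i
  have hi : x i = 1 ↔ y i = 1 := by simpa [posSupport] using congrArg (i ∈ ·) h
  rcases hx i with h₁ | h₁ <;> rcases hy i with h₂ | h₂ <;> simp_all

lemma card_inter_posSupport_lt [DecidableEq n] {k : ℕ} (hxk : (posSupport x).card = k)
    (hyk : (posSupport y).card = k) (hxy : x ≠ y) :
    (posSupport x ∩ posSupport y).card < k := by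
  refine lt_of_le_of_ne (hxk ▸ card_le_card inter_subset_left) fun h => hxy ?_
  have hinter_x := eq_of_subset_of_card_le inter_subset_left (hxk ▸ h.ge)
  have hinter_y := eq_of_subset_of_card_le inter_subset_right (hyk ▸ h.ge)
  exact eq_of_posSupport_eq hx hy (hinter_x.symm.trans hinter_y)

end SignVectors

lemma ZMod.natCast_ne_natCast_of_lt {p c k : ℕ} (hck : c < k) (hkp : k < 2 * p)
    (hcp : c + p ≠ k) : (c : ZMod p) ≠ k := by
  intro h
  have hdvd := (Nat.modEq_iff_dvd' hck.le).1 ((ZMod.natCast_eq_natCast_iff c k p).1 h)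
  have := Nat.eq_of_dvd_of_lt_two_mul (by omega) hdvd (by omega)
  omega

theorem stmt_3_general (m p : ℕ) (hp : p.Prime)
    (hp1 : m < 4 * p) (hp2 : 2 * p ≤ m)
    (Q : Finset (Fin m → ℤ))
    (hQW : ∀ x ∈ Q, (∀ i, x i = 1 ∨ x i = -1) ∧ ∑ i, x i = 0)
    (hQ : ∀ x ∈ Q, ∀ y ∈ Q, ∑ i, x i * y i ≠ (m : ℤ) - 4 * p) :
    Q.card ≤ m.choose p := by
  have : Fact p.Prime := ⟨hp⟩
  have hcard : ∀ x : Q, (posSupport x.1).card = m / 2 := fun x => by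
    have := sum_eq_two_mul_card_posSupport_sub (hQW x x.2).1
    rw [(hQW x x.2).2, Fintype.card_fin] at this
    omega
  have hinter : ∀ x y : Q, x ≠ y →
      ((posSupport x.1 ∩ posSupport y.1).card : ZMod p) ∈ univ.erase ((m / 2 : ℕ) : ZMod p) := by
    intro x y hxy
    have hlt := card_inter_posSupport_lt (hQW x x.2).1 (hQW y y.2).1 (hcard x) (hcard y)
      (Subtype.coe_ne_coe.2 hxy)
    have hdot := sum_mul_eq_card_inter_posSupport (hQW x x.2).1 (hQW y y.2).1
    rw [hcard, hcard, Fintype.card_fin] at hdot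
    have hne := hQ x x.2 y y.2
    refine mem_erase.2 ⟨ZMod.natCast_ne_natCast_of_lt hlt (by omega) fun h => hne ?_, mem_univ _⟩
    rw [hdot]
    omega
  have hL : (univ.erase ((m / 2 : ℕ) : ZMod p)).card = p - 1 := by
    rw [card_erase_of_mem (mem_univ _), card_univ, ZMod.card]
  have hQp := FranklWilson.card_le_choose (fun x : Q => posSupport x.1) hcard
    (notMem_erase _ _) (by omega) hinter
  rw [hL, Fintype.card_coe, Fintype.card_fin] at hQp
  refine hQp.trans ?_
  simpa [Nat.sub_add_cancel hp.one_le] using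
    Nat.choose_le_succ_of_lt_half_left (r := p - 1) (n := m) (by omega)

/-- Frankl–Wilson type bound: if Q is a set of vectors in {-1,1}^m with zero
coordinate sum and no two of its elements have scalar product a = m - 4p
(p prime, m/4 < p ≤ m/2, 4 | m), then |Q| ≤ C(m,p). -/
theorem stmt_3 (m p : ℕ) (hm : 4 ∣ m) (hp : p.Prime)
    (hp1 : m < 4 * p) (hp2 : 2 * p ≤ m)
    (Q : Finset (Fin m → ℤ))
    (hQW : ∀ x ∈ Q, (∀ i, x i = 1 ∨ x i = -1) ∧ ∑ i, x i = 0)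
    (hQ : ∀ x ∈ Q, ∀ y ∈ Q, ∑ i, x i * y i ≠ (m : ℤ) - 4 * p) :
    Q.card ≤ m.choose p :=
  stmt_3_general m p hp hp1 hp2 Q hQW hQ
end

section
/- There exists n₀ such that for all even m ≥ n₀ and any integer p with m/4 < p ≤ m/2 - √(m · ln m / κ) for a fixed constant κ < 2, the ratio C(m, m/2) / C(m, p) exceeds m + 2. -/
/-!
Write `m = 2h` and `p = h - d`. Passing from `C(2h, h - i - 1)` to `C(2h, h - i)` multiplies by
`(h + i + 1)/(h - i) = (1 + x)/(1 - x)` with `x = (2i + 1)/(2h + 1)`, and `(1 + x)/(1 - x) ≥ exp (2x)`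
(the first term of the artanh series). Summing the odd numbers `2i + 1` over `i < d` gives
`C(2h, h)/C(2h, h - d) ≥ exp (2d²/(m + 1))`. The hypothesis on `p` says `d² ≥ m log m / κ`, and
`2 m log m / (κ (m + 1)) > log (m + 2)` for large `m` because `2/κ > 1`.
-/

open Real Filter

lemma exp_two_mul_le_one_add_div_one_sub {x : ℝ} (h₀ : 0 ≤ x) (h₁ : x < 1) :
    exp (2 * x) ≤ (1 + x) / (1 - x) := by
  have hlog : 2 * x ≤ log ((1 + x) / (1 - x)) := by
    have hseries := Real.sum_range_le_log_div h₀ h₁ 1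
    norm_num at hseries
    linarith
  calc exp (2 * x) ≤ exp (log ((1 + x) / (1 - x))) := exp_le_exp.2 hlog
    _ = (1 + x) / (1 - x) := exp_log (div_pos (by linarith) (by linarith))

lemma exp_mul_choose_sub_succ_le (h d : ℕ) (hd : d < h) :
    exp (2 * (2 * d + 1) / (2 * h + 1)) * (2 * h).choose (h - (d + 1)) ≤
      (2 * h).choose (h - d) := by
  have hnat : (2 * h).choose (h - d) * (h - d) = (2 * h).choose (h - (d + 1)) * (h + d + 1) := by
    have e := Nat.choose_succ_right_eq (2 * h) (h - (d + 1))
    rwa [show h - (d + 1) + 1 = h - d by omega, show 2 * h - (h - (d + 1)) = h + d + 1 by omega] at e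
  have hreal : ((2 * h).choose (h - d) : ℝ) * (h - d) =
      (2 * h).choose (h - (d + 1)) * (h + d + 1) := by
    have := congrArg (Nat.cast : ℕ → ℝ) hnat
    push_cast [Nat.cast_sub hd.le] at this
    exact this
  have hdh : (d : ℝ) + 1 ≤ h := by exact_mod_cast hd
  have hratio : (1 + (2 * d + 1) / (2 * h + 1)) / (1 - (2 * d + 1) / (2 * h + 1)) =
      ((h : ℝ) + d + 1) / (h - d) := by
    field_simp
    rw [div_eq_div_iff (by linarith) (by linarith)]
    ring
  have hfactor := exp_two_mul_le_one_add_div_one_sub (x := (2 * d + 1) / (2 * h + 1))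
    (by positivity) ((div_lt_one (by positivity)).2 (by linarith))
  rw [hratio, ← mul_div_assoc] at hfactor
  calc exp (2 * (2 * d + 1) / (2 * h + 1)) * (2 * h).choose (h - (d + 1))
      ≤ ((h : ℝ) + d + 1) / (h - d) * (2 * h).choose (h - (d + 1)) := by gcongr
    _ = (2 * h).choose (h - d) := by
      rw [div_mul_eq_mul_div, div_eq_iff (by linarith)]
      linarith

lemma exp_mul_choose_sub_le_choose (h d : ℕ) (hd : d ≤ h) :
    exp (2 * d ^ 2 / (2 * h + 1)) * (2 * h).choose (h - d) ≤ (2 * h).choose h := by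
  induction d with
  | zero => simp
  | succ d ih =>
    calc exp (2 * (d + 1 : ℕ) ^ 2 / (2 * h + 1)) * (2 * h).choose (h - (d + 1))
        = exp (2 * d ^ 2 / (2 * h + 1)) *
            (exp (2 * (2 * d + 1) / (2 * h + 1)) * (2 * h).choose (h - (d + 1))) := by
          rw [← mul_assoc, ← exp_add]; push_cast; ring_nf
      _ ≤ exp (2 * d ^ 2 / (2 * h + 1)) * (2 * h).choose (h - d) := by
          gcongr; exact exp_mul_choose_sub_succ_le h d hd
      _ ≤ (2 * h).choose h := ih (by omega)

lemma eventually_succ_mul_log_add_two_lt {c : ℝ} (hc : 1 < c) :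
    ∀ᶠ x : ℝ in atTop, (x + 1) * log (x + 2) < c * x * log x := by
  filter_upwards [eventually_gt_atTop (exp 4), eventually_ge_atTop (2 / (c - 1))] with x hx hxc
  have hx1 : 1 < x := lt_trans (one_lt_exp_iff.2 (by norm_num)) hx
  have hlog : 4 < log x := (lt_log_iff_exp_lt (by linarith)).2 hx
  have hlog_add : log (x + 2) ≤ log x + 2 / x := by
    have := log_le_sub_one_of_pos (show 0 < (x + 2) / x by positivity)
    rw [log_div (by linarith) (by linarith)] at this
    have e : (x + 2) / x - 1 = 2 / x := by field_simp; ring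
    linarith
  have h2x : 2 / x ≤ 2 := by rw [div_le_iff₀ (by linarith)]; linarith
  have hcx : 2 ≤ (c - 1) * x := by rwa [div_le_iff₀ (by linarith), mul_comm] at hxc
  have hsplit : (x + 1) * (2 / x) = 2 + 2 / x := by field_simp
  nlinarith

/-- For fixed κ ∈ (0,2), there is n₀ such that for all even m ≥ n₀ and any
integer p with m/4 < p ≤ m/2 - √(m ln m / κ), we have
C(m, m/2)/C(m, p) > m + 2. -/
theorem stmt_7 (κ : ℝ) (hκ0 : 0 < κ) (hκ2 : κ < 2) :
    ∃ n₀ : ℕ, ∀ m : ℕ, n₀ ≤ m → 2 ∣ m → ∀ p : ℕ,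
      (m : ℝ) / 4 < p → (p : ℝ) ≤ (m : ℝ) / 2 - Real.sqrt (m * Real.log m / κ) →
      (m + 2 : ℝ) < (m.choose (m / 2) : ℝ) / (m.choose p : ℝ) := by
  obtain ⟨n₀, hn₀⟩ := eventually_atTop.mp <| tendsto_natCast_atTop_atTop.eventually <|
    eventually_succ_mul_log_add_two_lt ((one_lt_div hκ0).2 hκ2)
  refine ⟨n₀, fun m hm ⟨h, hmh⟩ p _ hp => ?_⟩
  subst hmh
  rw [show 2 * h / 2 = h by omega]
  push_cast at hp hn₀ ⊢
  have hph : p ≤ h := by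
    have := sqrt_nonneg (2 * h * log (2 * h) / κ)
    exact_mod_cast (by linarith : (p : ℝ) ≤ h)
  have hd : (2 * h * log (2 * h) / κ : ℝ) ≤ ((h - p : ℕ) : ℝ) ^ 2 :=
    (sqrt_le_iff.1 (by push_cast [hph]; linarith)).2
  have hlog : log (2 * h + 2) < 2 * ((h - p : ℕ) : ℝ) ^ 2 / (2 * h + 1) := by
    rw [lt_div_iff₀ (by positivity)]
    have := hn₀ (2 * h) hm
    push_cast at this
    calc log (2 * h + 2) * (2 * h + 1) < 2 / κ * (2 * h) * log (2 * h) := by linarith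
      _ = 2 * (2 * h * log (2 * h) / κ) := by ring
      _ ≤ 2 * ((h - p : ℕ) : ℝ) ^ 2 := by linarith
  have hchoose := exp_mul_choose_sub_le_choose h (h - p) (Nat.sub_le h p)
  rw [Nat.sub_sub_self hph] at hchoose
  rw [lt_div_iff₀ (by exact_mod_cast Nat.choose_pos (by omega : p ≤ 2 * h))]
  calc (2 * h + 2 : ℝ) * (2 * h).choose p
      < exp (2 * ((h - p : ℕ) : ℝ) ^ 2 / (2 * h + 1)) * (2 * h).choose p := by
        gcongr
        · exact_mod_cast Nat.choose_pos (by omega : p ≤ 2 * h)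
        · exact (log_lt_iff_lt_exp (by positivity)).1 hlog
    _ ≤ _ := by exact_mod_cast hchoose
end

section
/- Let f(x) be defined for x ≥ 0 by x + f(x) = min{p prime : p > x}. If there is a constant c₁ > 0 with f(x) ≤ c₁ ln x for all x ≥ 2, then there exists c₁' > 0 such that for all sufficiently large n and m = m(n) the largest multiple of 4 below n, and r_n ≥ 1/2 + c₁'·√(ln n / n), the smallest prime p exceeding m/(8r_n²) satisfies p < m/2 - √(m ln m / κ) for any fixed κ < 2. -/
/-- m(n): the largest multiple of 4 strictly below n. -/
def mOf (n : ℕ) : ℕ := 4 * ((n - 1) / 4)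

/-!
Take c₁' = √(8/κ), L = √(m ln m / κ) and x = m/(8r²). For large n the excess
t = c₁'√(ln n / n) of r over 1/2 is at most 1/4, so x ≤ m/2 - m t; and m t ≥ 2L
because m ≤ n ≤ 2m. The least prime above x is at most x' + f(x') ≤ x' + c₁ ln m
with x' = max(x, 2), and since c₁ ln m < L and 2 ≤ m/2 - 2L for large m, it lies
below m/2 - L.
-/

open Real Filter Topology

lemma mOf_le (n : ℕ) : mOf n ≤ n := by
  unfold mOf; omega

lemma le_mOf_add_four (n : ℕ) : n ≤ mOf n + 4 := by
  unfold mOf; omega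

lemma tendsto_mOf_atTop : Tendsto (fun n ↦ (mOf n : ℝ)) atTop atTop :=
  tendsto_natCast_atTop_atTop.comp <| tendsto_atTop_mono' atTop
    (Eventually.of_forall fun n ↦ Nat.sub_le_of_le_add (le_mOf_add_four n))
    (tendsto_sub_atTop_nat 4)

lemma tendsto_log_div_self_atTop : Tendsto (fun x ↦ log x / x) atTop (𝓝 0) :=
  isLittleO_log_id_atTop.tendsto_div_nhds_zero

lemma eventually_mul_log_lt_mul (a : ℝ) {b : ℝ} (hb : 0 < b) :
    ∀ᶠ x : ℝ in atTop, a * log x < b * x := by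
  have h := tendsto_log_div_self_atTop.const_mul a
  rw [mul_zero] at h
  filter_upwards [h.eventually (gt_mem_nhds hb), eventually_gt_atTop 0] with x hx hx0
  rwa [mul_div_assoc', div_lt_iff₀ hx0] at hx

lemma eventually_mul_sqrt_log_div_le (c : ℝ) {δ : ℝ} (hδ : 0 < δ) :
    ∀ᶠ x : ℝ in atTop, c * √(log x / x) ≤ δ := by
  have h := tendsto_log_div_self_atTop.sqrt.const_mul c
  rw [sqrt_zero, mul_zero] at h
  exact h.eventually (ge_mem_nhds hδ)

lemma div_eight_mul_sq_le {M t r : ℝ} (hM : 0 ≤ M) (ht : 0 ≤ t) (ht4 : t ≤ 1 / 4)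
    (hr : 1 / 2 + t ≤ r) : M / (8 * r ^ 2) ≤ M / 2 - M * t := by
  have hr2 : 2 + 8 * t ≤ 8 * r ^ 2 := by nlinarith
  calc M / (8 * r ^ 2) ≤ M / (2 + 8 * t) := div_le_div_of_nonneg_left hM (by linarith) hr2
    _ ≤ M / 2 - M * t := by
      rw [div_le_iff₀ (by linarith)]
      nlinarith [mul_nonneg (mul_nonneg hM ht) (by linarith : (0:ℝ) ≤ 1 - 4 * t)]

lemma two_mul_sqrt_mul_log_le {m n κ : ℝ} (hκ : 0 < κ) (hm : 1 ≤ m) (hmn : m ≤ n)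
    (hnm : n ≤ 2 * m) :
    2 * √(m * log m / κ) ≤ m * (√(8 / κ) * √(log n / n)) := by
  have hn : 0 < n := by linarith
  have hlog : n * log m ≤ 2 * m * log n := by
    have := log_le_log (by linarith) hmn
    nlinarith [log_nonneg hm]
  have hl : 2 * √(m * log m / κ) = √(4 * m * (n * log m) / (κ * n)) := by
    rw [show 4 * m * (n * log m) / (κ * n) = 2 ^ 2 * (m * log m / κ)
        by field_simp; ring,
      sqrt_mul (by positivity), sqrt_sq zero_le_two]
  have hr : m * (√(8 / κ) * √(log n / n)) = √(4 * m * (2 * m * log n) / (κ * n)) := by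
    rw [show 4 * m * (2 * m * log n) / (κ * n) = m ^ 2 * (8 / κ * (log n / n))
        by field_simp; ring,
      sqrt_mul (sq_nonneg m), sqrt_sq (by linarith), sqrt_mul (by positivity)]
  rw [hl, hr]
  gcongr

lemma sqrt_mul_log_div_le {m κ : ℝ} (hκ : 0 < κ) (hm : 0 ≤ m)
    (hlog : 64 * log m ≤ κ * m) :
    √(m * log m / κ) ≤ m / 8 := by
  rw [sqrt_le_left (by positivity), div_le_iff₀ hκ]
  nlinarith

lemma mul_log_lt_sqrt {m κ c : ℝ} (hκ : 0 < κ) (hc : 0 ≤ c) (hm : 1 < m)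
    (hlog : κ * c ^ 2 * log m < m) : c * log m < √(m * log m / κ) := by
  have hlogm := log_pos hm
  rw [lt_sqrt (by positivity), lt_div_iff₀ hκ]
  nlinarith

lemma cast_le_add_of_minimal_prime {f : ℝ → ℝ}
    (hf : ∀ x : ℝ, 0 ≤ x →
      IsLeast {y : ℝ | ∃ q : ℕ, q.Prime ∧ (q : ℝ) = y ∧ x < y} (x + f x))
    {x y : ℝ} {p : ℕ} (hmin : ∀ q : ℕ, q.Prime → x < q → p ≤ q) (hy : 0 ≤ y)
    (hxy : x ≤ y) :
    (p : ℝ) ≤ y + f y := by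
  obtain ⟨q, hq, hqy, hyq⟩ := (hf y hy).1
  rw [← hqy]
  exact_mod_cast hmin q hq (hqy ▸ hxy.trans_lt hyq)

theorem stmt_14_general (f : ℝ → ℝ)
    (hf : ∀ x : ℝ, 0 ≤ x →
      IsLeast {y : ℝ | ∃ q : ℕ, q.Prime ∧ (q : ℝ) = y ∧ x < y} (x + f x))
    (c₁ : ℝ) (hc₁ : 0 < c₁) (hfc : ∀ x : ℝ, 2 ≤ x → f x ≤ c₁ * Real.log x)
    (κ : ℝ) (hκ0 : 0 < κ) :
    ∃ c₁' : ℝ, 0 < c₁' ∧ ∃ n₀ : ℕ, ∀ n : ℕ, n₀ ≤ n → ∀ r : ℝ,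
      1 / 2 + c₁' * Real.sqrt (Real.log n / n) ≤ r →
      ∀ p : ℕ, p.Prime → (mOf n : ℝ) / (8 * r ^ 2) < p →
        (∀ q : ℕ, q.Prime → (mOf n : ℝ) / (8 * r ^ 2) < q → p ≤ q) →
        (p : ℝ) < (mOf n : ℝ) / 2 -
          Real.sqrt ((mOf n : ℝ) * Real.log (mOf n) / κ) := by
  refine ⟨√(8 / κ), by positivity, ?_⟩
  have hm := tendsto_mOf_atTop
  obtain ⟨n₀, hn₀⟩ := eventually_atTop.1 <|
    (tendsto_natCast_atTop_atTop.eventually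
      (eventually_mul_sqrt_log_div_le √(8 / κ) (by norm_num : (0 : ℝ) < 1 / 4))).and <|
    (hm.eventually (eventually_ge_atTop 8)).and <|
    (hm.eventually (eventually_mul_log_lt_mul 64 hκ0)).and
    (hm.eventually (eventually_mul_log_lt_mul (κ * c₁ ^ 2) one_pos))
  refine ⟨n₀, fun n hn r hr p _ _ hmin ↦ ?_⟩
  obtain ⟨hs, hm8, hlog64, hlogc⟩ := hn₀ n hn
  have hmn : (mOf n : ℝ) ≤ n := Nat.cast_le.mpr (mOf_le n)
  have hnm : (n : ℝ) ≤ 2 * mOf n := by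
    have : (n : ℝ) ≤ mOf n + 4 := by exact_mod_cast le_mOf_add_four n
    linarith
  set m : ℝ := (mOf n : ℝ)
  set L := √(m * log m / κ)
  have hx : m / (8 * r ^ 2) ≤ m / 2 - 2 * L :=
    (div_eight_mul_sq_le (by linarith) (by positivity) hs hr).trans
      (by linarith [two_mul_sqrt_mul_log_le hκ0 (by linarith) hmn hnm])
  have hLm : L ≤ m / 8 := sqrt_mul_log_div_le hκ0 (by linarith) hlog64.le
  have hcL : c₁ * log m < L := mul_log_lt_sqrt hκ0 hc₁.le (by linarith) (by simpa using hlogc)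
  set y := max (m / (8 * r ^ 2)) 2
  have hy : y ≤ m / 2 - 2 * L := max_le hx (by linarith)
  have hym : y ≤ m := by linarith [sqrt_nonneg (m * log m / κ)]
  calc (p : ℝ) ≤ y + f y :=
        cast_le_add_of_minimal_prime hf hmin (by positivity) (le_max_left _ _)
    _ ≤ y + c₁ * log y := by grw [hfc y (le_max_right _ _)]
    _ ≤ y + c₁ * log m := by gcongr
    _ < m / 2 - L := by linarith

/-- If the prime gap function f (with x + f(x) the least prime exceeding x)
satisfies f(x) ≤ c₁ ln x, then for any fixed κ ∈ (0,2) there is c₁' > 0 such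
that for all large n, all r ≥ 1/2 + c₁'√(ln n / n) and m = m(n), the least
prime p exceeding m/(8r²) satisfies p < m/2 - √(m ln m / κ). -/
theorem stmt_14 (f : ℝ → ℝ)
    (hf : ∀ x : ℝ, 0 ≤ x →
      IsLeast {y : ℝ | ∃ q : ℕ, q.Prime ∧ (q : ℝ) = y ∧ x < y} (x + f x))
    (c₁ : ℝ) (hc₁ : 0 < c₁) (hfc : ∀ x : ℝ, 2 ≤ x → f x ≤ c₁ * Real.log x)
    (κ : ℝ) (hκ0 : 0 < κ) (hκ2 : κ < 2) :
    ∃ c₁' : ℝ, 0 < c₁' ∧ ∃ n₀ : ℕ, ∀ n : ℕ, n₀ ≤ n → ∀ r : ℝ,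
      1 / 2 + c₁' * Real.sqrt (Real.log n / n) ≤ r →
      ∀ p : ℕ, p.Prime → (mOf n : ℝ) / (8 * r ^ 2) < p →
        (∀ q : ℕ, q.Prime → (mOf n : ℝ) / (8 * r ^ 2) < q → p ≤ q) →
        (p : ℝ) < (mOf n : ℝ) / 2 -
          Real.sqrt ((mOf n : ℝ) * Real.log (mOf n) / κ) :=
  stmt_14_general f hf c₁ hc₁ hfc κ hκ0
end
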